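/- The only rational numbers t = a/b (in lowest terms, b > 0) such that both (t² + 13t + 49)(t² + 245t + 2401)³/t⁷ and (t² + 13t + 49)(t² + 5t + 1)³/t are integers are t ∈ {1, 7, 49, −1, −7, −49}. -/

import Mathlib

/-!
Write `j(t) = (t² + 13t + 49)(t² + 245t + 2401)³ / t⁷` for the first expression.
Clearing denominators in `j(t) = m` shows that `t` is a root of a monic integer polynomial
of degree 8, so `t` is an integer by the rational root theorem. The Atkin–Lehner involution
`t ↦ 49 / t` of `X₀(7)` carries the second expression to `j(49 / t)`, so `49 / t` is an integer
as well, and `t` divides 49.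
-/

open Polynomial

theorem exists_int_eq_of_aeval_div_pow_eq_int {p : ℤ[X]} (hp : p.Monic) {k : ℕ}
    (hdeg : p.natDegree = k + 1) {t : ℚ} (ht : t ≠ 0) {m : ℤ} (h : aeval t p / t ^ k = m) :
    ∃ a : ℤ, t = a := by
  have hmonic : (p - C m * X ^ k).Monic := by
    refine hp.sub_of_left (degree_lt_degree ?_)
    rw [hdeg]
    exact (natDegree_C_mul_X_pow_le _ _).trans_lt k.lt_succ_self
  have hroot : aeval t (p - C m * X ^ k) = 0 := by
    rw [div_eq_iff (pow_ne_zero k ht)] at h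
    simp [h]
  obtain ⟨a, ha⟩ := isInteger_of_is_root_of_monic hmonic hroot
  exact ⟨a, by simpa using ha.symm⟩

theorem exists_int_eq_of_x0seven_eq_int {t : ℚ} (ht : t ≠ 0) {m : ℤ}
    (h : (t ^ 2 + 13 * t + 49) * (t ^ 2 + 245 * t + 2401) ^ 3 / t ^ 7 = m) :
    ∃ a : ℤ, t = a := by
  have hp : ((X ^ 2 + 13 * X + 49) * (X ^ 2 + 245 * X + 2401) ^ 3 : ℤ[X]).Monic := by
    monicity!
  have hdeg :
      ((X ^ 2 + 13 * X + 49) * (X ^ 2 + 245 * X + 2401) ^ 3 : ℤ[X]).natDegree = 7 + 1 := by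
    compute_degree!
  exact exists_int_eq_of_aeval_div_pow_eq_int hp hdeg ht (by simpa [map_ofNat] using h)

theorem x0seven_atkinLehner {t : ℚ} (ht : t ≠ 0) :
    (t ^ 2 + 13 * t + 49) * (t ^ 2 + 5 * t + 1) ^ 3 / t =
      ((49 / t) ^ 2 + 13 * (49 / t) + 49) * ((49 / t) ^ 2 + 245 * (49 / t) + 2401) ^ 3 /
        (49 / t) ^ 7 := by
  field_simp
  ring

theorem Int.cast_mem_of_dvd_fortyNine {a : ℤ} (h : a ∣ 49) :
    (a : ℚ) ∈ ({1, 7, 49, -1, -7, -49} : Set ℚ) := by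
  have hdiv : a.natAbs ∈ Nat.divisors 49 := by simpa using Int.natAbs_dvd_natAbs.mpr h
  rw [show Nat.divisors 49 = {1, 7, 49} by decide] at hdiv
  simp only [Finset.mem_insert, Finset.mem_singleton] at hdiv
  obtain rfl | rfl | rfl | rfl | rfl | rfl :
      a = 1 ∨ a = 7 ∨ a = 49 ∨ a = -1 ∨ a = -7 ∨ a = -49 := by
    omega
  all_goals norm_num

theorem stmt_3 (t : ℚ) (ht : t ≠ 0) :
    ((∃ m : ℤ, (t ^ 2 + 13 * t + 49) * (t ^ 2 + 245 * t + 2401) ^ 3 / t ^ 7 = (m : ℚ)) ∧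
      (∃ n : ℤ, (t ^ 2 + 13 * t + 49) * (t ^ 2 + 5 * t + 1) ^ 3 / t = (n : ℚ))) ↔
    t ∈ ({1, 7, 49, -1, -7, -49} : Set ℚ) := by
  constructor
  · rintro ⟨⟨m, hm⟩, ⟨n, hn⟩⟩
    obtain ⟨a, rfl⟩ := exists_int_eq_of_x0seven_eq_int ht hm
    obtain ⟨b, hb⟩ := exists_int_eq_of_x0seven_eq_int (div_ne_zero (by norm_num) ht)
      ((x0seven_atkinLehner ht).symm.trans hn)
    have hab : a * b = 49 := by
      rw [div_eq_iff ht] at hb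
      exact_mod_cast (hb.trans (mul_comm _ _)).symm
    exact Int.cast_mem_of_dvd_fortyNine ⟨b, hab.symm⟩
  · simp only [Set.mem_insert_iff, Set.mem_singleton_iff]
    rintro (rfl | rfl | rfl | rfl | rfl | rfl)
    · exact ⟨⟨1168429123449, by norm_num⟩, ⟨21609, by norm_num⟩⟩
    · exact ⟨⟨16581375, by norm_num⟩, ⟨16581375, by norm_num⟩⟩
    · exact ⟨⟨21609, by norm_num⟩, ⟨1168429123449, by norm_num⟩⟩
    · exact ⟨⟨-371323264041, by norm_num⟩, ⟨999, by norm_num⟩⟩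
    · exact ⟨⟨-3375, by norm_num⟩, ⟨-3375, by norm_num⟩⟩
    · exact ⟨⟨999, by norm_num⟩, ⟨-371323264041, by norm_num⟩⟩
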